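/- For every Pierce sequence σ ∈ Σ, -1/2 ≤ E*(σ) ≤ 0, where E*(σ) = Σ_{n=1}^∞ (-1)^n n/(σ_1···σ_{n+1}). Consequently, the error-sum function E(x) = Σ_{n=1}^∞ (x - s_n(x)) of Pierce expansions satisfies -1/2 < E(x) ≤ 0 for all x ∈ [0,1]. -/

import Mathlib

open scoped BigOperators

/-- Reciprocal of an extended natural number as a real, with `1/∞ = 0`. -/
noncomputable def pinv (a : ℕ∞) : ℝ := ((a.toNat : ℕ) : ℝ)⁻¹

/-- First Pierce digit: `⌊1/x⌋` for `x ≠ 0`, and `∞` for `x = 0`. -/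
noncomputable def pd1 (x : ℝ) : ℕ∞ := if x = 0 then ⊤ else (⌊x⁻¹⌋₊ : ℕ∞)

/-- Pierce map `T(x) = 1 - ⌊1/x⌋ x` for `x ≠ 0`, `T(0) = 0`. -/
noncomputable def pT (x : ℝ) : ℝ := if x = 0 then 0 else 1 - (⌊x⁻¹⌋₊ : ℝ) * x

/-- `n`-th Pierce digit `d_n(x) = d_1(T^{n-1} x)` (for `n ≥ 1`). -/
noncomputable def pdig (n : ℕ) (x : ℝ) : ℕ∞ := pd1 (pT^[n-1] x)

/-- `1/(d_1(x) ⋯ d_n(x))`, with the convention that a factor `∞` makes it `0`. -/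
noncomputable def pprodR (n : ℕ) (x : ℝ) : ℝ := ∏ k ∈ Finset.Icc 1 n, pinv (pdig k x)

/-- `n`-th partial sum `s_n(x)` of the Pierce expansion of `x`. -/
noncomputable def psum (n : ℕ) (x : ℝ) : ℝ :=
  ∑ k ∈ Finset.Icc 1 n, (-1 : ℝ) ^ (k + 1) * pprodR k x

/-- The error-sum function of Pierce expansions `E(x) = Σ_{n≥1} (x - s_n(x))`. -/
noncomputable def pE (x : ℝ) : ℝ := ∑' n : ℕ, (x - psum (n + 1) x)

/-- A Pierce sequence (0-indexed: `σ k` is the paper's `σ_{k+1}`): terms are positive, strictly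
increasing while finite, and once a term is `∞` all later terms are `∞`. -/
def IsPierce (σ : ℕ → ℕ∞) : Prop :=
  1 ≤ σ 0 ∧ ∀ n, σ n < σ (n + 1) ∨ (σ n = ⊤ ∧ σ (n + 1) = ⊤)

/-- `n`-th partial sum `φ_n(σ)`. -/
noncomputable def pphiN (n : ℕ) (σ : ℕ → ℕ∞) : ℝ :=
  ∑ k ∈ Finset.range n, (-1 : ℝ) ^ k * ∏ i ∈ Finset.range (k + 1), pinv (σ i)

/-- `φ(σ) = Σ_{k≥1} (-1)^{k+1}/(σ_1 ⋯ σ_k)`. -/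
noncomputable def pphi (σ : ℕ → ℕ∞) : ℝ :=
  ∑' k : ℕ, (-1 : ℝ) ^ k * ∏ i ∈ Finset.range (k + 1), pinv (σ i)

/-- The error-sum function of Pierce sequences `E*(σ) = Σ_{n≥1} (φ(σ) - φ_n(σ))`. -/
noncomputable def pEstar (σ : ℕ → ℕ∞) : ℝ := ∑' n : ℕ, (pphi σ - pphiN (n + 1) σ)

/-- The series formula `Σ_{n≥1} (-1)^n n/(σ_1 ⋯ σ_{n+1})` for the error-sum of a sequence. -/
noncomputable def pEstarSeries (σ : ℕ → ℕ∞) : ℝ :=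
  ∑' n : ℕ, (-1 : ℝ) ^ (n + 1) * (n + 1) * ∏ i ∈ Finset.range (n + 2), pinv (σ i)

/-- The metric `ρ(x,y) = 1/x + 1/y` for `x ≠ y` (with `1/∞ = 0`), `ρ(x,x) = 0`. -/
noncomputable def prho (x y : ℕ∞) : ℝ := if x = y then 0 else pinv x + pinv y

/-- The metric `ρ^ℕ(σ,τ) = Σ_{n≥1} ρ(σ_n, τ_n)/n!` on sequences. -/
noncomputable def prhoN (σ τ : ℕ → ℕ∞) : ℝ :=
  ∑' n : ℕ, prho (σ n) (τ n) / ((n + 1).factorial : ℝ)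

/-! Both error sums are alternating series `Σ (-1)^(n+1) b_n` with `b` antitone and summable, so
they lie in `[-b_0, 0]`. For a Pierce sequence `b_n = (n+1)/(σ_1 ⋯ σ_{n+2})`; it is antitone
because `σ_{n+3} ≥ n+3`, it is at most `1/(n+1)!` because `σ_k ≥ k`, and `b_0 ≤ 1/2`.
For `x ∈ [0,1]` one has `x - s_n(x) = (-1)^n T^n(x)/(d_1(x) ⋯ d_n(x))`, so
`b_n = T^{n+1}(x)/(d_1 ⋯ d_{n+1})`. The digits of `x` form a Pierce sequence, which gives
summability, and `b_0 ≤ T(x) < 1/2` gives the strict lower bound. -/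

open Finset Filter
open scoped Nat

theorem tsum_neg_one_pow_succ_mul_mem_Icc {b : ℕ → ℝ} (hb : Antitone b) (hs : Summable b) :
    ∑' n, (-1 : ℝ) ^ (n + 1) * b n ∈ Set.Icc (-b 0) 0 := by
  have hb0 : ∀ n, 0 ≤ b n := hb.le_of_tendsto hs.tendsto_atTop_zero
  have halt : Summable fun n => (-1 : ℝ) ^ n * b n :=
    hs.of_norm_bounded fun n => by simp [abs_of_nonneg (hb0 n)]
  have hl := halt.hasSum.tendsto_sum_nat
  have hupper := hb.tendsto_le_alternating_series hl 0
  have hlower := hb.alternating_series_le_tendsto hl 0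
  simp only [pow_succ, mul_neg_one, neg_mul, tsum_neg]
  simp only [Nat.mul_zero, range_zero, sum_empty, zero_add, range_one, sum_singleton, pow_zero,
    one_mul] at hupper hlower
  constructor <;> linarith

lemma pinv_nonneg (a : ℕ∞) : 0 ≤ pinv a := by unfold pinv; positivity

lemma pinv_le_one (a : ℕ∞) : pinv a ≤ 1 := by
  rcases Nat.eq_zero_or_pos a.toNat with h | h
  · simp [pinv, h]
  · exact inv_le_one_of_one_le₀ (by exact_mod_cast h)

lemma pinv_le_inv_of_le {a : ℕ∞} {m : ℕ} (hm : 0 < m) (h : (m : ℕ∞) ≤ a) :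
    pinv a ≤ (m : ℝ)⁻¹ := by
  induction a using ENat.recTopCoe with
  | top => simp [pinv]
  | coe a =>
    simp only [pinv, ENat.toNat_natCast]
    exact inv_anti₀ (by exact_mod_cast hm) (by exact_mod_cast h)

noncomputable def invProd (σ : ℕ → ℕ∞) (n : ℕ) : ℝ := ∏ i ∈ range n, pinv (σ i)

lemma invProd_nonneg (σ : ℕ → ℕ∞) (n : ℕ) : 0 ≤ invProd σ n :=
  prod_nonneg fun _ _ => pinv_nonneg _

lemma invProd_succ (σ : ℕ → ℕ∞) (n : ℕ) : invProd σ (n + 1) = invProd σ n * pinv (σ n) :=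
  prod_range_succ _ _

lemma invProd_succ_le (σ : ℕ → ℕ∞) (n : ℕ) : invProd σ (n + 1) ≤ invProd σ n := by
  rw [invProd_succ]
  exact mul_le_of_le_one_right (invProd_nonneg σ n) (pinv_le_one _)

lemma summable_inv_factorial_succ : Summable fun n : ℕ => (((n + 1)! : ℕ) : ℝ)⁻¹ := by
  have := (summable_nat_add_iff 1).2 (Real.summable_pow_div_factorial 1)
  simpa using this

namespace IsPierce

variable {σ : ℕ → ℕ∞}

lemma succ_le (hσ : IsPierce σ) (n : ℕ) : ((n + 1 : ℕ) : ℕ∞) ≤ σ n := by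
  induction n with
  | zero => simpa using hσ.1
  | succ n ih =>
    rcases hσ.2 n with h | ⟨-, h⟩
    · exact Order.add_one_le_of_lt (ih.trans_lt h)
    · simp [h]

lemma pinv_le (hσ : IsPierce σ) (n : ℕ) : pinv (σ n) ≤ ((n : ℝ) + 1)⁻¹ := by
  simpa using pinv_le_inv_of_le n.succ_pos (hσ.succ_le n)

lemma invProd_le (hσ : IsPierce σ) (n : ℕ) : invProd σ n ≤ ((n ! : ℕ) : ℝ)⁻¹ := by
  rw [invProd, ← prod_range_add_one_eq_factorial, Nat.cast_prod, ← prod_inv_distrib]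
  exact prod_le_prod (fun _ _ => pinv_nonneg _) fun i _ => by simpa using hσ.pinv_le i

lemma antitone_succ_mul_invProd (hσ : IsPierce σ) :
    Antitone fun n : ℕ => ((n : ℝ) + 1) * invProd σ (n + 2) := by
  refine antitone_nat_of_succ_le fun n => ?_
  have hP := invProd_nonneg σ (n + 2)
  have hσn : pinv (σ (n + 2)) ≤ ((n : ℝ) + 3)⁻¹ := by
    have := hσ.pinv_le (n + 2); push_cast at this; rwa [add_assoc, two_add_one_eq_three] at this
  have hratio : ((n : ℝ) + 2) * ((n : ℝ) + 3)⁻¹ ≤ (n : ℝ) + 1 := by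
    rw [← div_eq_mul_inv, div_le_iff₀ (by positivity)]; nlinarith
  calc ((↑(n + 1) : ℝ) + 1) * invProd σ (n + 1 + 2)
      = ((n : ℝ) + 2) * pinv (σ (n + 2)) * invProd σ (n + 2) := by
        rw [invProd_succ]; push_cast; ring
    _ ≤ ((n : ℝ) + 2) * ((n : ℝ) + 3)⁻¹ * invProd σ (n + 2) := by gcongr
    _ ≤ ((n : ℝ) + 1) * invProd σ (n + 2) := by gcongr

lemma succ_mul_invProd_le (hσ : IsPierce σ) (n : ℕ) :
    ((n : ℝ) + 1) * invProd σ (n + 2) ≤ (((n + 1)! : ℕ) : ℝ)⁻¹ := by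
  calc ((n : ℝ) + 1) * invProd σ (n + 2) ≤ ((n : ℝ) + 2) * (((n + 2)! : ℕ) : ℝ)⁻¹ :=
        mul_le_mul (by linarith) (hσ.invProd_le _) (invProd_nonneg _ _) (by positivity)
    _ = (((n + 1)! : ℕ) : ℝ)⁻¹ := by
        rw [Nat.factorial_succ (n + 1)]; push_cast
        field_simp; ring

theorem pEstarSeries_mem_Icc (hσ : IsPierce σ) : pEstarSeries σ ∈ Set.Icc (-(1 / 2)) 0 := by
  have hseries : pEstarSeries σ =
      ∑' n : ℕ, (-1 : ℝ) ^ (n + 1) * (((n : ℝ) + 1) * invProd σ (n + 2)) :=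
    tsum_congr fun n => by rw [invProd, mul_assoc]
  have hfirst : invProd σ 2 ≤ 1 / 2 := by simpa using hσ.invProd_le 2
  obtain ⟨hlower, hupper⟩ := tsum_neg_one_pow_succ_mul_mem_Icc hσ.antitone_succ_mul_invProd
    (summable_inv_factorial_succ.of_nonneg_of_le
      (fun n => mul_nonneg (by positivity) (invProd_nonneg σ _)) hσ.succ_mul_invProd_le)
  rw [hseries]
  refine ⟨le_trans ?_ hlower, hupper⟩
  norm_num at hfirst ⊢
  linarith

end IsPierce

lemma pT_of_pos {y : ℝ} (hy : 0 < y) : pT y = 1 - (⌊y⁻¹⌋₊ : ℝ) * y := if_neg hy.ne'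

lemma floor_inv_mul_le_one {y : ℝ} (hy : 0 < y) : (⌊y⁻¹⌋₊ : ℝ) * y ≤ 1 := by
  have := mul_le_mul_of_nonneg_right (Nat.floor_le (inv_nonneg.2 hy.le)) hy.le
  rwa [inv_mul_cancel₀ hy.ne'] at this

lemma one_lt_floor_inv_add_one_mul {y : ℝ} (hy : 0 < y) : 1 < ((⌊y⁻¹⌋₊ : ℝ) + 1) * y := by
  have := mul_lt_mul_of_pos_right (Nat.lt_floor_add_one y⁻¹) hy
  rwa [inv_mul_cancel₀ hy.ne'] at this

lemma one_le_floor_inv {y : ℝ} (hy : 0 < y) (hy1 : y ≤ 1) : 1 ≤ ⌊y⁻¹⌋₊ :=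
  Nat.le_floor (by simpa using one_le_inv₀ hy |>.2 hy1)

lemma pT_nonneg {y : ℝ} (hy : 0 ≤ y) : 0 ≤ pT y := by
  rcases hy.eq_or_lt with rfl | hy
  · simp [pT]
  · rw [pT_of_pos hy]; linarith [floor_inv_mul_le_one hy]

lemma pT_le {y : ℝ} (hy : 0 ≤ y) : pT y ≤ y := by
  rcases hy.eq_or_lt with rfl | hy
  · simp [pT]
  · rw [pT_of_pos hy]; linarith [one_lt_floor_inv_add_one_mul hy]

lemma mapsTo_pT : Set.MapsTo pT (Set.Icc 0 1) (Set.Icc 0 1) :=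
  fun _ hy => ⟨pT_nonneg hy.1, (pT_le hy.1).trans hy.2⟩

lemma pT_lt_inv_floor_inv_add_one {y : ℝ} (hy : 0 < y) (hy1 : y ≤ 1) :
    pT y < ((⌊y⁻¹⌋₊ : ℝ) + 1)⁻¹ := by
  have hm : (1 : ℝ) ≤ ⌊y⁻¹⌋₊ := by exact_mod_cast one_le_floor_inv hy hy1
  have hy' := one_lt_floor_inv_add_one_mul hy
  rw [pT_of_pos hy, ← mul_one (_ + 1)⁻¹, lt_inv_mul_iff₀ (by positivity)]
  nlinarith

lemma pT_lt_half {y : ℝ} (hy : y ∈ Set.Icc (0 : ℝ) 1) : pT y < 1 / 2 := by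
  rcases hy.1.eq_or_lt with rfl | hpos
  · simp [pT]
  · have hm : (1 : ℝ) ≤ ⌊y⁻¹⌋₊ := by exact_mod_cast one_le_floor_inv hpos hy.2
    calc pT y < ((⌊y⁻¹⌋₊ : ℝ) + 1)⁻¹ := pT_lt_inv_floor_inv_add_one hpos hy.2
      _ ≤ 1 / 2 := by rw [one_div]; gcongr; linarith

lemma pd1_lt_pd1_pT {y : ℝ} (hy : 0 < y) (hy1 : y ≤ 1) : pd1 y < pd1 (pT y) := by
  rw [pd1, if_neg hy.ne']
  by_cases hT : pT y = 0
  · simp [pd1, hT]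
  · rw [pd1, if_neg hT, Nat.cast_lt, ← Nat.add_one_le_iff]
    refine Nat.le_floor ?_
    have := pT_lt_inv_floor_inv_add_one hy hy1
    push_cast
    rw [le_inv_comm₀ (by positivity) (lt_of_le_of_ne (pT_nonneg hy.le) (Ne.symm hT))]
    exact this.le

theorem isPierce_pd1_iterate_pT {x : ℝ} (hx : x ∈ Set.Icc (0 : ℝ) 1) :
    IsPierce fun n => pd1 (pT^[n] x) := by
  refine ⟨?_, fun n => ?_⟩
  · rcases hx.1.eq_or_lt with rfl | hpos
    · simp [pd1]
    · simpa [pd1, hpos.ne'] using one_le_floor_inv hpos hx.2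
  · obtain ⟨hy0, hy1⟩ := mapsTo_pT.iterate n hx
    dsimp only
    rw [Function.iterate_succ_apply']
    rcases hy0.eq_or_lt with h | hpos
    · simp [← h, pd1, pT]
    · exact .inl (pd1_lt_pd1_pT hpos hy1)

lemma pinv_pd1_mul_one_sub_pT {y : ℝ} (hy : y ∈ Set.Icc (0 : ℝ) 1) :
    pinv (pd1 y) * (1 - pT y) = y := by
  rcases hy.1.eq_or_lt with rfl | hpos
  · simp [pd1, pinv]
  · have hm : (⌊y⁻¹⌋₊ : ℝ) ≠ 0 := by
      have := one_le_floor_inv hpos hy.2; positivity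
    rw [pT_of_pos hpos, pd1, if_neg hpos.ne', pinv, ENat.toNat_natCast, sub_sub_cancel,
      ← mul_assoc, inv_mul_cancel₀ hm, one_mul]

lemma pprodR_succ (n : ℕ) (x : ℝ) : pprodR (n + 1) x = pprodR n x * pinv (pd1 (pT^[n] x)) := by
  rw [pprodR, prod_Icc_succ_top (by omega), ← pprodR]
  rfl

lemma pprodR_eq_invProd (n : ℕ) (x : ℝ) :
    pprodR n x = invProd (fun i => pd1 (pT^[i] x)) n := by
  induction n with
  | zero => simp [pprodR, invProd]
  | succ n ih => rw [pprodR_succ, ih, invProd_succ]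

lemma psum_succ (n : ℕ) (x : ℝ) :
    psum (n + 1) x = psum n x + (-1 : ℝ) ^ (n + 2) * pprodR (n + 1) x := by
  rw [psum, sum_Icc_succ_top (by omega), ← psum]

theorem sub_psum_eq {x : ℝ} (hx : x ∈ Set.Icc (0 : ℝ) 1) (n : ℕ) :
    x - psum n x = (-1 : ℝ) ^ n * (pT^[n] x * pprodR n x) := by
  induction n with
  | zero => simp [psum, pprodR]
  | succ n ih =>
    have hstep := pinv_pd1_mul_one_sub_pT (mapsTo_pT.iterate n hx)
    rw [psum_succ, ← sub_sub, ih, Function.iterate_succ_apply', pprodR_succ]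
    linear_combination (-(-1 : ℝ) ^ n * pprodR n x) * hstep

theorem pE_mem_Ioc {x : ℝ} (hx : x ∈ Set.Icc (0 : ℝ) 1) : pE x ∈ Set.Ioc (-(1 / 2)) 0 := by
  set σ := fun n => pd1 (pT^[n] x)
  have hσ : IsPierce σ := isPierce_pd1_iterate_pT hx
  set b := fun n : ℕ => pT^[n + 1] x * invProd σ (n + 1)
  have horbit (n : ℕ) := mapsTo_pT.iterate n hx
  have hseries : pE x = ∑' n, (-1 : ℝ) ^ (n + 1) * b n :=
    tsum_congr fun n => by rw [sub_psum_eq hx, pprodR_eq_invProd]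
  have hb_le (n : ℕ) : b n ≤ invProd σ (n + 1) :=
    mul_le_of_le_one_left (invProd_nonneg σ _) (horbit (n + 1)).2
  have hanti : Antitone b := antitone_nat_of_succ_le fun n =>
    mul_le_mul (by rw [Function.iterate_succ_apply' _ (n + 1)]; exact pT_le (horbit _).1)
      (invProd_succ_le σ _) (invProd_nonneg σ _) (horbit _).1
  have hsum : Summable b := summable_inv_factorial_succ.of_nonneg_of_le
    (fun _ => mul_nonneg (horbit _).1 (invProd_nonneg σ _))
    fun n => (hb_le n).trans (hσ.invProd_le _)
  have hfirst : b 0 < 1 / 2 := by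
    have hP : invProd σ 1 ≤ 1 := (invProd_succ_le σ 0).trans_eq (by simp [invProd])
    exact (mul_le_of_le_one_right (pT_nonneg hx.1) hP).trans_lt (pT_lt_half hx)
  obtain ⟨hlower, hupper⟩ := tsum_neg_one_pow_succ_mul_mem_Icc hanti hsum
  rw [hseries]
  exact ⟨by linarith, hupper⟩

theorem stmt12 :
    (∀ σ : ℕ → ℕ∞, IsPierce σ → -(1 / 2 : ℝ) ≤ pEstarSeries σ ∧ pEstarSeries σ ≤ 0) ∧
    (∀ x ∈ Set.Icc (0 : ℝ) 1, -(1 / 2 : ℝ) < pE x ∧ pE x ≤ 0) :=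
  ⟨fun _ hσ => hσ.pEstarSeries_mem_Icc, fun _ hx => pE_mem_Ioc hx⟩
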